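/- In the same fork SCM, the observational conditional expectation satisfies E[Z | Y = y] = (4/(4+σ²))·y, which is a strictly increasing linear function of y; hence E[Z | Y=y] ≠ E[Z | do(Y=y)] for all y ≠ 0, quantifying the gap between correlation and causation. -/

import Mathlib

/-!
Put `c = cov(Y, Z) / Var Y`. The residual `Z - c Y` is uncorrelated with `Y`, and `(Y, Z - c Y)`
is a linear image of the Gaussian vector `(X, ε_Y, ε_Z)`, so `Z - c Y` is independent of `Y`.
Hence `E[Z | Y] = c Y + E[Z - c Y] = c Y`, and in the fork `cov(Y, Z) = 4 Var X = 4` while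
`Var Y = 4 Var X + Var ε_Y = 4 + σ²`.
-/

open MeasureTheory ProbabilityTheory
open scoped NNReal

namespace ProbabilityTheory

variable {Ω : Type*} {mΩ : MeasurableSpace Ω} {P : Measure Ω}

lemma covariance_eq_zero_of_variance_eq_zero [IsFiniteMeasure P] {Y : Ω → ℝ} (Z : Ω → ℝ)
    (hY : MemLp Y 2 P) (hYvar : Var[Y; P] = 0) : cov[Y, Z; P] = 0 := by
  refine integral_eq_zero_of_ae ?_
  filter_upwards [ae_eq_integral_of_variance_eq_zero hY hYvar] with ω hω
  simp [hω]

lemma HasGaussianLaw.covariance_sub_mul_eq_zero {Y Z : Ω → ℝ}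
    (hYZ : HasGaussianLaw (fun ω ↦ (Y ω, Z ω)) P) :
    cov[Y, fun ω ↦ Z ω - cov[Y, Z; P] / Var[Y; P] * Y ω; P] = 0 := by
  have := hYZ.isProbabilityMeasure
  have hY := hYZ.fst.memLp_two
  rw [covariance_fun_sub_right hY hYZ.snd.memLp_two (hY.const_mul _),
    covariance_const_mul_right, covariance_self hY.aemeasurable]
  by_cases hvar : Var[Y; P] = 0
  -- the slope is `0` by `x / 0 = 0`, and a degenerate `Y` is uncorrelated with anything
  · simp [hvar, covariance_eq_zero_of_variance_eq_zero Z hY hvar]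
  · field_simp
    ring

theorem HasGaussianLaw.condExp_comap_eq {Y Z : Ω → ℝ}
    (hYZ : HasGaussianLaw (fun ω ↦ (Y ω, Z ω)) P) (hYm : Measurable Y) (hZm : Measurable Z) :
    P[Z | MeasurableSpace.comap Y inferInstance] =ᵐ[P]
      fun ω ↦ P[Z] + cov[Y, Z; P] / Var[Y; P] * (Y ω - P[Y]) := by
  have := hYZ.isProbabilityMeasure
  set c := cov[Y, Z; P] / Var[Y; P]
  set W : Ω → ℝ := fun ω ↦ Z ω - c * Y ω
  have hYY : Measurable[MeasurableSpace.comap Y inferInstance] Y :=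
    measurable_iff_comap_le.2 le_rfl
  have hYW : HasGaussianLaw (fun ω ↦ (Y ω, W ω)) P := by
    simpa using hYZ.map_fun ((ContinuousLinearMap.fst ℝ ℝ ℝ).prod
      (ContinuousLinearMap.snd ℝ ℝ ℝ - c • ContinuousLinearMap.fst ℝ ℝ ℝ))
  have hindep : IndepFun Y W P :=
    hYW.indepFun_of_covariance_eq_zero hYZ.covariance_sub_mul_eq_zero
  have hcY : Integrable (fun ω ↦ c * Y ω) P := hYZ.fst.integrable.const_mul c
  have hcondW : P[W | MeasurableSpace.comap Y inferInstance] =ᵐ[P] fun _ ↦ P[W] :=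
    condExp_indep_eq (hZm.sub (hYm.const_mul c)).comap_le hYm.comap_le
      (measurable_iff_comap_le.2 le_rfl).stronglyMeasurable hindep.symm
  have hcondY : P[fun ω ↦ c * Y ω | MeasurableSpace.comap Y inferInstance] = fun ω ↦ c * Y ω :=
    condExp_of_stronglyMeasurable hYm.comap_le (hYY.const_mul c).stronglyMeasurable hcY
  have hZ : Z = fun ω ↦ c * Y ω + W ω := by
    funext ω
    simp [W]
  have hintW : P[W] = P[Z] - c * P[Y] := by
    rw [integral_sub hYZ.snd.integrable hcY, integral_const_mul]
  calc P[Z | MeasurableSpace.comap Y inferInstance]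
      =ᵐ[P] P[fun ω ↦ c * Y ω | MeasurableSpace.comap Y inferInstance]
        + P[W | MeasurableSpace.comap Y inferInstance] := by
        nth_rw 1 [hZ]
        exact condExp_add hcY hYW.snd.integrable _
    _ =ᵐ[P] fun ω ↦ c * Y ω + P[W] := by
        rw [hcondY]
        exact hcondW.add_left
    _ = fun ω ↦ P[Z] + c * (Y ω - P[Y]) := by
        funext ω
        rw [hintW]
        ring

section ConstMulAdd

variable {X ε₁ ε₂ : Ω → ℝ}

lemma iIndepFun.hasGaussianLaw_prodMk_const_mul_add (hX : HasGaussianLaw X P)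
    (h₁ : HasGaussianLaw ε₁ P) (h₂ : HasGaussianLaw ε₂ P) (hind : iIndepFun ![X, ε₁, ε₂] P)
    (a b : ℝ) : HasGaussianLaw (fun ω ↦ (a * X ω + ε₁ ω, b * X ω + ε₂ ω)) P := by
  have hjoint : HasGaussianLaw (fun ω ↦ (![X, ε₁, ε₂] · ω)) P := hind.hasGaussianLaw fun i ↦ by
    fin_cases i
    exacts [hX, h₁, h₂]
  let L : (Fin 3 → ℝ) →L[ℝ] ℝ × ℝ := ContinuousLinearMap.prod
    (a • ContinuousLinearMap.proj 0 + ContinuousLinearMap.proj 1)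
    (b • ContinuousLinearMap.proj 0 + ContinuousLinearMap.proj 2)
  simpa [L] using hjoint.map_fun L

lemma covariance_const_mul_add_of_iIndepFun [IsFiniteMeasure P] (hX : MemLp X 2 P)
    (h₁ : MemLp ε₁ 2 P) (h₂ : MemLp ε₂ 2 P) (hind : iIndepFun ![X, ε₁, ε₂] P) (a b : ℝ) :
    cov[fun ω ↦ a * X ω + ε₁ ω, fun ω ↦ b * X ω + ε₂ ω; P] = a * b * Var[X; P] := by
  have hX₁ : IndepFun X ε₁ P := by simpa using hind.indepFun (i := 0) (j := 1) (by decide)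
  have hX₂ : IndepFun X ε₂ P := by simpa using hind.indepFun (i := 0) (j := 2) (by decide)
  have h₁₂ : IndepFun ε₁ ε₂ P := by simpa using hind.indepFun (i := 1) (j := 2) (by decide)
  change cov[(fun ω ↦ a * X ω) + ε₁, (fun ω ↦ b * X ω) + ε₂; P] = _
  rw [covariance_add_left (hX.const_mul a) h₁ ((hX.const_mul b).add h₂),
    covariance_add_right (hX.const_mul a) (hX.const_mul b) h₂,
    covariance_add_right h₁ (hX.const_mul b) h₂, covariance_const_mul_left,
    covariance_const_mul_right, covariance_const_mul_left, covariance_const_mul_right,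
    covariance_self hX.aemeasurable, hX₂.covariance_eq_zero hX h₂,
    hX₁.symm.covariance_eq_zero h₁ hX, h₁₂.covariance_eq_zero h₁ h₂]
  ring

lemma variance_const_mul_add_of_indepFun (hX : MemLp X 2 P) (h₁ : MemLp ε₁ 2 P)
    (hind : IndepFun X ε₁ P) (a : ℝ) :
    Var[fun ω ↦ a * X ω + ε₁ ω; P] = a ^ 2 * Var[X; P] + Var[ε₁; P] := by
  rw [← variance_const_mul]
  exact (hind.comp (measurable_const_mul a) measurable_id).variance_add (hX.const_mul a) h₁

lemma integral_const_mul_add_of_hasLaw_gaussianReal {v₀ v₁ : ℝ≥0}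
    (hX : HasLaw X (gaussianReal 0 v₀) P) (h₁ : HasLaw ε₁ (gaussianReal 0 v₁) P) (a : ℝ) :
    P[fun ω ↦ a * X ω + ε₁ ω] = 0 := by
  rw [integral_add (hX.hasGaussianLaw.integrable.const_mul a) h₁.hasGaussianLaw.integrable,
    integral_const_mul, hX.integral_eq, h₁.integral_eq, integral_id_gaussianReal,
    integral_id_gaussianReal, mul_zero, add_zero]

end ConstMulAdd

end ProbabilityTheory

theorem fork_condExp_vs_do_general {Ω : Type*} [MeasureSpace Ω]
    [IsProbabilityMeasure (ℙ : Measure Ω)]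
    (σ : ℝ≥0)
    (X εY εZ Y Z : Ω → ℝ) (hXm : Measurable X) (hεYm : Measurable εY) (hεZm : Measurable εZ)
    (hXlaw : Measure.map X ℙ = gaussianReal 0 1)
    (hεYlaw : Measure.map εY ℙ = gaussianReal 0 (σ ^ 2))
    (hεZlaw : Measure.map εZ ℙ = gaussianReal 0 (σ ^ 2))
    (hindep : iIndepFun ![X, εY, εZ] ℙ)
    (hY : Y = fun ω => 2 * X ω + εY ω) (hZ : Z = fun ω => 2 * X ω + εZ ω) :
    (ℙ[Z | MeasurableSpace.comap Y inferInstance]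
        =ᵐ[ℙ] fun ω => (4 / (4 + (σ : ℝ) ^ 2)) * Y ω) ∧
    StrictMono (fun y : ℝ => (4 / (4 + (σ : ℝ) ^ 2)) * y) ∧
    (∀ y : ℝ, y ≠ 0 → (4 / (4 + (σ : ℝ) ^ 2)) * y ≠ 0) := by
  have hc : 0 < 4 / (4 + (σ : ℝ) ^ 2) := by positivity
  refine ⟨?_, fun a b hab ↦ (mul_lt_mul_iff_right₀ hc).2 hab, fun y hy ↦ mul_ne_zero hc.ne' hy⟩
  have hXlaw' : HasLaw X (gaussianReal 0 1) ℙ := ⟨hXm.aemeasurable, hXlaw⟩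
  have hεYlaw' : HasLaw εY (gaussianReal 0 (σ ^ 2)) ℙ := ⟨hεYm.aemeasurable, hεYlaw⟩
  have hεZlaw' : HasLaw εZ (gaussianReal 0 (σ ^ 2)) ℙ := ⟨hεZm.aemeasurable, hεZlaw⟩
  have hX2 := hXlaw'.hasGaussianLaw.memLp_two
  have hεY2 := hεYlaw'.hasGaussianLaw.memLp_two
  have hvarX : Var[X; ℙ] = 1 := by
    rw [hXlaw'.variance_eq, variance_id_gaussianReal, NNReal.coe_one]
  have hvarY : Var[Y; ℙ] = 4 + (σ : ℝ) ^ 2 := by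
    have hXεY : IndepFun X εY ℙ := by simpa using hindep.indepFun (i := 0) (j := 1) (by decide)
    rw [hY, variance_const_mul_add_of_indepFun hX2 hεY2 hXεY, hvarX, hεYlaw'.variance_eq,
      variance_id_gaussianReal]
    push_cast
    ring
  have hcov : cov[Y, Z; ℙ] = 4 := by
    rw [hY, hZ, covariance_const_mul_add_of_iIndepFun hX2 hεY2
      hεZlaw'.hasGaussianLaw.memLp_two hindep, hvarX]
    norm_num
  have hYZ : HasGaussianLaw (fun ω ↦ (Y ω, Z ω)) ℙ := hY ▸ hZ ▸
    hindep.hasGaussianLaw_prodMk_const_mul_add hXlaw'.hasGaussianLaw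
      hεYlaw'.hasGaussianLaw hεZlaw'.hasGaussianLaw 2 2
  have hmeanY : ℙ[Y] = 0 := hY ▸ integral_const_mul_add_of_hasLaw_gaussianReal hXlaw' hεYlaw' 2
  have hmeanZ : ℙ[Z] = 0 := hZ ▸ integral_const_mul_add_of_hasLaw_gaussianReal hXlaw' hεZlaw' 2
  filter_upwards [hYZ.condExp_comap_eq (hY ▸ (hXm.const_mul 2).add hεYm)
    (hZ ▸ (hXm.const_mul 2).add hεZm)] with ω hω
  rw [hω, hmeanY, hmeanZ, hcov, hvarY, zero_add, sub_zero]

/-- In the fork SCM, the observational conditional expectation satisfies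
`E[Z | Y] = (4/(4+σ²))·Y` almost surely; the map `y ↦ (4/(4+σ²))·y` is strictly
increasing and linear; hence for every `y ≠ 0` the observational value
`(4/(4+σ²))·y` differs from the interventional value `E[Z | do(Y=y)] = 0`,
quantifying the gap between correlation and causation. -/
theorem fork_condExp_vs_do {Ω : Type*} [MeasureSpace Ω]
    [IsProbabilityMeasure (ℙ : Measure Ω)]
    (σ : ℝ≥0) (hσ : 0 < σ)
    (X εY εZ Y Z : Ω → ℝ) (hXm : Measurable X) (hεYm : Measurable εY) (hεZm : Measurable εZ)
    (hXlaw : Measure.map X ℙ = gaussianReal 0 1)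
    (hεYlaw : Measure.map εY ℙ = gaussianReal 0 (σ ^ 2))
    (hεZlaw : Measure.map εZ ℙ = gaussianReal 0 (σ ^ 2))
    (hindep : iIndepFun ![X, εY, εZ] ℙ)
    (hY : Y = fun ω => 2 * X ω + εY ω) (hZ : Z = fun ω => 2 * X ω + εZ ω) :
    (ℙ[Z | MeasurableSpace.comap Y inferInstance]
        =ᵐ[ℙ] fun ω => (4 / (4 + (σ : ℝ) ^ 2)) * Y ω) ∧
    StrictMono (fun y : ℝ => (4 / (4 + (σ : ℝ) ^ 2)) * y) ∧
    (∀ y : ℝ, y ≠ 0 → (4 / (4 + (σ : ℝ) ^ 2)) * y ≠ 0) :=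
  fork_condExp_vs_do_general σ X εY εZ Y Z hXm hεYm hεZm hXlaw hεYlaw hεZlaw hindep hY hZ
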